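/- Under the g-FOB model on a rooted phylogenetic X-tree with edge lengths, the variance of future phylogenetic diversity satisfies Var[φ] ≥ Σ_{e : C(e) is a singleton} λ_e² P_e (1 − P_e), i.e., the variance is bounded below by the contribution of the pendant edges. -/

import Mathlib

/-!
Write `φ = ∑ₑ λₑ Yₑ`, so that `Var φ = ∑_{e,f} λₑ λ_f Cov(Yₑ, Y_f)`. Every covariance is
nonnegative: for nested clusters the survival events are nested, and `P(A) - P(A) P(B) ≥ 0`
when `A ⊆ B`; for disjoint clusters the events depend on disjoint sets of independent taxa,
so the covariance vanishes. Hence `Var φ` dominates its diagonal `∑ₑ λₑ² Pₑ (1 - Pₑ)`, and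
in particular the part of the diagonal coming from pendant edges.
-/

open MeasureTheory ProbabilityTheory Finset

section Covariance

variable {Ω : Type*} [MeasurableSpace Ω] {μ : Measure Ω}

lemma sum_variance_le_variance_sum_of_covariance_nonneg [IsFiniteMeasure μ] {η : Type*}
    [Fintype η] {X : η → Ω → ℝ} (hX : ∀ e, MemLp (X e) 2 μ)
    (hcov : ∀ e f, 0 ≤ cov[X e, X f; μ]) :
    ∑ e, Var[X e; μ] ≤ Var[fun ω ↦ ∑ e, X e ω; μ] := by
  rw [variance_fun_sum' fun e _ ↦ hX e]
  refine sum_le_sum fun e _ ↦ ?_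
  rw [← covariance_self (hX e).aemeasurable]
  exact single_le_sum (fun f _ ↦ hcov e f) (mem_univ e)

variable {A B : Set Ω}

lemma memLp_indicator_one [IsFiniteMeasure μ] (hA : MeasurableSet A) :
    MemLp (A.indicator (1 : Ω → ℝ)) 2 μ :=
  memLp_indicator_const 2 hA 1 (.inr (measure_ne_top μ A))

variable [IsProbabilityMeasure μ]

lemma covariance_indicator_one (hA : MeasurableSet A) (hB : MeasurableSet B) :
    cov[A.indicator 1, B.indicator 1; μ] = μ.real (A ∩ B) - μ.real A * μ.real B := by
  rw [covariance_eq_sub (memLp_indicator_one hA) (memLp_indicator_one hB),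
    ← Set.inter_indicator_one, integral_indicator_one hA, integral_indicator_one hB,
    integral_indicator_one (hA.inter hB)]

lemma variance_indicator_one (hA : MeasurableSet A) :
    Var[A.indicator 1; μ] = μ.real A * (1 - μ.real A) := by
  rw [← covariance_self (memLp_indicator_one hA).aemeasurable,
    covariance_indicator_one hA hA, Set.inter_self]
  ring

lemma covariance_indicator_one_nonneg_of_subset (hA : MeasurableSet A) (hB : MeasurableSet B)
    (hAB : A ⊆ B) : 0 ≤ cov[A.indicator 1, B.indicator 1; μ] := by
  rw [covariance_indicator_one hA hB, Set.inter_eq_left.2 hAB]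
  nlinarith [measureReal_nonneg (μ := μ) (s := A), measureReal_le_one (μ := μ) (s := B)]

end Covariance

section Survival

variable {Ω ι : Type*} {surv : ι → Ω → Bool}

def anySurvives (surv : ι → Ω → Bool) (s : Finset ι) : Set Ω := {ω | ∃ i ∈ s, surv i ω = true}

lemma anySurvives_mono {s t : Finset ι} (hst : s ⊆ t) : anySurvives surv s ⊆ anySurvives surv t :=
  fun _ ⟨i, hi, hsurv⟩ ↦ ⟨i, hst hi, hsurv⟩

lemma anySurvives_eq_preimage (s : Finset ι) :
    anySurvives surv s = (fun ω (i : s) ↦ surv i ω) ⁻¹' {v | ∃ i, v i = true} := by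
  ext ω
  simp [anySurvives]

variable [MeasurableSpace Ω] {μ : Measure Ω}

lemma measurableSet_anySurvives (hmeas : ∀ i, Measurable (surv i)) (s : Finset ι) :
    MeasurableSet (anySurvives surv s) := by
  rw [anySurvives_eq_preimage]
  exact measurable_pi_lambda _ (fun i : s ↦ hmeas i) MeasurableSet.of_discrete

lemma measureReal_anySurvives_inter_of_disjoint (hindep : iIndepFun surv μ)
    (hmeas : ∀ i, Measurable (surv i)) {s t : Finset ι} (hst : Disjoint s t) :
    μ.real (anySurvives surv s ∩ anySurvives surv t) =
      μ.real (anySurvives surv s) * μ.real (anySurvives surv t) := by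
  simp only [measureReal_def, anySurvives_eq_preimage,
    (hindep.indepFun_finset s t hst hmeas).measure_inter_preimage_eq_mul _ _
      MeasurableSet.of_discrete MeasurableSet.of_discrete, ENNReal.toReal_mul]

lemma covariance_indicator_anySurvives_nonneg [IsProbabilityMeasure μ] (hindep : iIndepFun surv μ)
    (hmeas : ∀ i, Measurable (surv i)) {s t : Finset ι} (hst : s ⊆ t ∨ t ⊆ s ∨ Disjoint s t) :
    0 ≤ cov[(anySurvives surv s).indicator 1, (anySurvives surv t).indicator 1; μ] := by
  have hs := measurableSet_anySurvives hmeas s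
  have ht := measurableSet_anySurvives hmeas t
  rcases hst with hst | hts | hst
  · exact covariance_indicator_one_nonneg_of_subset hs ht (anySurvives_mono hst)
  · rw [covariance_comm]
    exact covariance_indicator_one_nonneg_of_subset ht hs (anySurvives_mono hts)
  · rw [covariance_indicator_one hs ht, measureReal_anySurvives_inter_of_disjoint hindep hmeas hst,
      sub_self]

end Survival

theorem variance_future_PD_pendant_lower_bound_general
    {Ω : Type*} [MeasurableSpace Ω] (μ : Measure Ω) [IsProbabilityMeasure μ]
    {ι : Type*}
    (surv : ι → Ω → Bool)
    (hmeas : ∀ i, Measurable (surv i))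
    (hindep : iIndepFun surv μ)
    {η : Type*} [Fintype η]
    (C : η → Finset ι)
    (hC_laminar : ∀ e f, C e ⊆ C f ∨ C f ⊆ C e ∨ Disjoint (C e) (C f))
    (lam : η → ℝ) (hlam : ∀ e, 0 ≤ lam e)
    (Y : η → Ω → ℝ)
    (hY : ∀ e ω, Y e ω = if ∃ i ∈ C e, surv i ω = true then 1 else 0)
    (P : η → ℝ) (hP : ∀ e, P e = (μ {ω | Y e ω = 1}).toReal)
    (φ : Ω → ℝ) (hφ : ∀ ω, φ ω = ∑ e, lam e * Y e ω) :
    variance φ μ ≥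
      ∑ e ∈ Finset.univ.filter (fun e => (C e).card = 1),
        (lam e) ^ 2 * P e * (1 - P e) := by
  obtain rfl : Y = fun e ↦ (anySurvives surv (C e)).indicator 1 := by
    ext e ω
    simp only [hY, Set.indicator, anySurvives, Set.mem_ofPred_eq, Pi.one_apply]
    congr
  obtain rfl : φ = fun ω ↦ ∑ e, lam e * (anySurvives surv (C e)).indicator 1 ω := funext hφ
  have hA e := measurableSet_anySurvives hmeas (C e)
  have hvar e : lam e ^ 2 * P e * (1 - P e) =
      Var[fun ω ↦ lam e * (anySurvives surv (C e)).indicator 1 ω; μ] := by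
    rw [variance_const_mul, variance_indicator_one (hA e), hP, measureReal_def]
    simp only [Set.indicator_eq_one_iff_mem, Set.ofPred_mem_eq]
    ring
  calc ∑ e ∈ univ.filter (fun e => (C e).card = 1), lam e ^ 2 * P e * (1 - P e)
      = ∑ e ∈ univ.filter (fun e => (C e).card = 1),
          Var[fun ω ↦ lam e * (anySurvives surv (C e)).indicator 1 ω; μ] :=
        sum_congr rfl fun e _ ↦ hvar e
    _ ≤ ∑ e, Var[fun ω ↦ lam e * (anySurvives surv (C e)).indicator 1 ω; μ] :=
        sum_le_sum_of_subset_of_nonneg (filter_subset _ _) fun _ _ _ ↦ variance_nonneg _ _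
    _ ≤ _ := by
        refine sum_variance_le_variance_sum_of_covariance_nonneg
          (fun e ↦ (memLp_indicator_one (hA e)).const_mul (lam e)) fun e f ↦ ?_
        rw [covariance_const_mul_left, covariance_const_mul_right]
        exact mul_nonneg (hlam e) (mul_nonneg (hlam f)
          (covariance_indicator_anySurvives_nonneg hindep hmeas (hC_laminar e f)))

/-- Under the g-FOB model on a rooted phylogenetic tree (encoded by the
distinct clusters `C e` of its edges, forming a laminar family), the variance of future
phylogenetic diversity `φ = ∑ e, lam e * Y e` is bounded below by the contribution of the
pendant edges (the edges whose cluster is a singleton):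
`Var[φ] ≥ ∑_{e : |C e| = 1} (lam e)^2 * P e * (1 - P e)`. -/
theorem variance_future_PD_pendant_lower_bound
    {Ω : Type*} [MeasurableSpace Ω] (μ : Measure Ω) [IsProbabilityMeasure μ]
    {ι : Type*} [Fintype ι]
    (surv : ι → Ω → Bool)
    (hmeas : ∀ i, Measurable (surv i))
    (hindep : iIndepFun surv μ)
    (p : ι → ℝ) (hp01 : ∀ i, p i ∈ Set.Icc (0 : ℝ) 1)
    (hp : ∀ i, (μ {ω | surv i ω = true}).toReal = p i)
    {η : Type*} [Fintype η]
    (C : η → Finset ι) (hC : ∀ e, (C e).Nonempty)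
    (hC_distinct : Function.Injective C)
    (hC_laminar : ∀ e f, C e ⊆ C f ∨ C f ⊆ C e ∨ Disjoint (C e) (C f))
    (lam : η → ℝ) (hlam : ∀ e, 0 ≤ lam e)
    (Y : η → Ω → ℝ)
    (hY : ∀ e ω, Y e ω = if ∃ i ∈ C e, surv i ω = true then 1 else 0)
    (P : η → ℝ) (hP : ∀ e, P e = (μ {ω | Y e ω = 1}).toReal)
    (φ : Ω → ℝ) (hφ : ∀ ω, φ ω = ∑ e, lam e * Y e ω) :
    variance φ μ ≥
      ∑ e ∈ Finset.univ.filter (fun e => (C e).card = 1),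
        (lam e) ^ 2 * P e * (1 - P e) :=
  variance_future_PD_pendant_lower_bound_general μ surv hmeas hindep C hC_laminar lam hlam Y hY P hP
    φ hφ
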